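/- (Pullback of the weak inverse-harmonicity pairing) Let Ω̂, Ω ⊂ ℝ² be bounded open sets, let x : Ω̂ → Ω be a C¹ diffeomorphism with det J(x)(ξ) > 0 for every ξ ∈ Ω̂, and let φ̂ : Ω → ℝ² be a C¹ map with compact support in Ω. Setting φ := φ̂ ∘ x, one has the change-of-variables identity ∫_Ω Σ_{i=1}^{2} ∇φ̂ᵢ(p) · ∇(x⁻¹)ᵢ(p) dp = ∫_{Ω̂} (∂_ξφ(ξ) : A(∂x)(ξ)) / det J(x)(ξ) dξ, where ∂_ξφ is the Jacobian matrix of φ with respect to ξ and M : N denotes the Frobenius inner product of 2×2 matrices. -/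

import Mathlib

/-! The substitution `p = x ξ` turns the left side into `∫_{Ω̂} |det J| (∇φ̂ ∘ x) : (∂y ∘ x)` with
`J = ∂x`. By the chain rule `∂_ξ(φ̂ ∘ x) = (∇φ̂ ∘ x) J`, and differentiating `y ∘ x = id` gives
`∂y ∘ x = J⁻¹`. Finally `A(J)` is the adjugate of `JᵀJ`, so `(P J) : A(J) = det J · (P : adj J)`
for every `P`, and `adj J = det J · J⁻¹`. -/

open MeasureTheory Matrix

noncomputable def jacMat (x : (Fin 2 → ℝ) → (Fin 2 → ℝ)) (ξ : Fin 2 → ℝ) :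
    Matrix (Fin 2) (Fin 2) ℝ :=
  Matrix.of fun i j => fderiv ℝ (fun q => x q i) ξ (Pi.single j 1)

noncomputable def gradComp (φ : (Fin 2 → ℝ) → (Fin 2 → ℝ)) (i : Fin 2) (p : Fin 2 → ℝ) :
    Fin 2 → ℝ :=
  fun a => fderiv ℝ (fun q => φ q i) p (Pi.single a 1)

/-- The matrix `A(J) = [[g₂₂, −g₁₂], [−g₁₂, g₁₁]]` built from the metric tensor `G = JᵀJ`. -/
def Amat (J : Matrix (Fin 2) (Fin 2) ℝ) : Matrix (Fin 2) (Fin 2) ℝ :=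
  !![(Jᵀ * J) 1 1, -((Jᵀ * J) 0 1); -((Jᵀ * J) 0 1), (Jᵀ * J) 0 0]

def frobInner (M N : Matrix (Fin 2) (Fin 2) ℝ) : ℝ :=
  ∑ i, ∑ j, M i j * N i j

open scoped Topology

section JacobianMatrix

variable {x y φ : (Fin 2 → ℝ) → Fin 2 → ℝ} {ξ : Fin 2 → ℝ}

lemma jacMat_eq_toMatrix' (hx : DifferentiableAt ℝ x ξ) :
    jacMat x ξ = LinearMap.toMatrix' (fderiv ℝ x ξ : (Fin 2 → ℝ) →ₗ[ℝ] Fin 2 → ℝ) := by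
  ext i j
  simp [jacMat, LinearMap.toMatrix'_apply, fderiv_apply hx]

lemma det_jacMat (hx : DifferentiableAt ℝ x ξ) : (jacMat x ξ).det = (fderiv ℝ x ξ).det := by
  rw [jacMat_eq_toMatrix' hx, LinearMap.det_toMatrix']

lemma jacMat_comp (hφ : DifferentiableAt ℝ φ (x ξ)) (hx : DifferentiableAt ℝ x ξ) :
    jacMat (fun q => φ (x q)) ξ = jacMat φ (x ξ) * jacMat x ξ := by
  change jacMat (φ ∘ x) ξ = _
  rw [jacMat_eq_toMatrix' (hφ.comp ξ hx), jacMat_eq_toMatrix' hφ, jacMat_eq_toMatrix' hx,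
    ← LinearMap.toMatrix'_comp, fderiv_comp ξ hφ hx]
  rfl

lemma jacMat_of_eventuallyEq_id (h : x =ᶠ[𝓝 ξ] id) : jacMat x ξ = 1 := by
  rw [jacMat_eq_toMatrix' (differentiableAt_id.congr_of_eventuallyEq h), h.fderiv_eq, fderiv_id]
  exact LinearMap.toMatrix'_id

lemma jacMat_mul_eq_one_of_eventually_leftInverse (hy : DifferentiableAt ℝ y (x ξ))
    (hx : DifferentiableAt ℝ x ξ) (h : ∀ᶠ q in 𝓝 ξ, y (x q) = q) :
    jacMat y (x ξ) * jacMat x ξ = 1 := by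
  rw [← jacMat_comp hy hx]
  exact jacMat_of_eventuallyEq_id h

lemma sum_gradComp_dotProduct (φ ψ : (Fin 2 → ℝ) → Fin 2 → ℝ) (p : Fin 2 → ℝ) :
    ∑ i, gradComp φ i p ⬝ᵥ gradComp ψ i p = frobInner (jacMat φ p) (jacMat ψ p) :=
  rfl

end JacobianMatrix

lemma Matrix.adjugate_eq_det_smul_of_mul_eq_one {n α : Type*} [Fintype n] [DecidableEq n]
    [CommRing α] {J Q : Matrix n n α} (h : Q * J = 1) : adjugate J = J.det • Q :=
  calc adjugate J = adjugate J * (J * Q) := by rw [mul_eq_one_comm.1 h, Matrix.mul_one]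
    _ = J.det • Q := by rw [← Matrix.mul_assoc, adjugate_mul, Matrix.smul_mul, Matrix.one_mul]

lemma frobInner_smul_right (c : ℝ) (M N : Matrix (Fin 2) (Fin 2) ℝ) :
    frobInner M (c • N) = c * frobInner M N := by
  simp only [frobInner, Matrix.smul_apply, smul_eq_mul, Finset.mul_sum, mul_left_comm]

lemma frobInner_mul_Amat (P J : Matrix (Fin 2) (Fin 2) ℝ) :
    frobInner (P * J) (Amat J) = J.det * frobInner P (adjugate J) := by
  simp only [frobInner, Amat, adjugate_fin_two, det_fin_two, mul_apply, transpose_apply, of_apply,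
    Fin.sum_univ_two, cons_val', cons_val_fin_one, cons_val_zero, cons_val_one]
  ring

lemma frobInner_mul_Amat_div_det {P J Q : Matrix (Fin 2) (Fin 2) ℝ} (h : Q * J = 1) :
    frobInner (P * J) (Amat J) / J.det = J.det * frobInner P Q := by
  have hdet : J.det ≠ 0 := right_ne_zero_of_mul_eq_one (by rw [← det_mul, h, det_one])
  rw [frobInner_mul_Amat, adjugate_eq_det_smul_of_mul_eq_one h, frobInner_smul_right,
    mul_div_cancel_left₀ _ hdet]

theorem weak_inverse_harmonicity_pullback_general
    (Ωhat Ω : Set (Fin 2 → ℝ))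
    (hΩhat_open : IsOpen Ωhat) (hΩ_open : IsOpen Ω)
    (x y : (Fin 2 → ℝ) → (Fin 2 → ℝ))
    (hx : ContDiffOn ℝ 1 x Ωhat) (hy : ContDiffOn ℝ 1 y Ω)
    (hbij : Set.BijOn x Ωhat Ω)
    (hinv_left : ∀ ξ ∈ Ωhat, y (x ξ) = ξ)
    (hdet : ∀ ξ ∈ Ωhat, 0 < (jacMat x ξ).det)
    (φhat : (Fin 2 → ℝ) → (Fin 2 → ℝ))
    (hφhat : ContDiff ℝ 1 φhat) :
    (∫ p in Ω, ∑ i : Fin 2, gradComp φhat i p ⬝ᵥ gradComp y i p)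
      = ∫ ξ in Ωhat,
          frobInner (jacMat (fun q => φhat (x q)) ξ) (Amat (jacMat x ξ))
            / (jacMat x ξ).det := by
  have hdiffx : ∀ ξ ∈ Ωhat, DifferentiableAt ℝ x ξ := fun ξ hξ =>
    (hx.contDiffAt (hΩhat_open.mem_nhds hξ)).differentiableAt one_ne_zero
  have hdiffy : ∀ p ∈ Ω, DifferentiableAt ℝ y p := fun p hp =>
    (hy.contDiffAt (hΩ_open.mem_nhds hp)).differentiableAt one_ne_zero
  rw [← hbij.image_eq, integral_image_eq_integral_abs_det_fderiv_smul volume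
    hΩhat_open.measurableSet (fun ξ hξ => (hdiffx ξ hξ).hasFDerivAt.hasFDerivWithinAt) hbij.injOn]
  refine setIntegral_congr_fun hΩhat_open.measurableSet fun ξ hξ => ?_
  have hinv : jacMat y (x ξ) * jacMat x ξ = 1 :=
    jacMat_mul_eq_one_of_eventually_leftInverse (hdiffy _ (hbij.mapsTo hξ)) (hdiffx ξ hξ)
      (Filter.mem_of_superset (hΩhat_open.mem_nhds hξ) hinv_left)
  rw [jacMat_comp (hφhat.differentiable one_ne_zero _) (hdiffx ξ hξ),
    frobInner_mul_Amat_div_det hinv, ← det_jacMat (hdiffx ξ hξ), abs_of_pos (hdet ξ hξ),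
    sum_gradComp_dotProduct, smul_eq_mul]

/-- **Pullback of the weak inverse-harmonicity pairing.** For an orientation-preserving C¹
diffeomorphism `x : Ω̂ → Ω` and a C¹ test map `φ̂` compactly supported in `Ω`, the Dirichlet
pairing of `φ̂` with the inverse map equals the pulled-back integral
`∫_{Ω̂} (∂_ξ(φ̂∘x) : A(∂x)) / det J dξ`. -/
theorem weak_inverse_harmonicity_pullback
    (Ωhat Ω : Set (Fin 2 → ℝ))
    (hΩhat_open : IsOpen Ωhat) (hΩ_open : IsOpen Ω)
    (hΩhat_bdd : Bornology.IsBounded Ωhat) (hΩ_bdd : Bornology.IsBounded Ω)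
    (x y : (Fin 2 → ℝ) → (Fin 2 → ℝ))
    (hx : ContDiffOn ℝ 1 x Ωhat) (hy : ContDiffOn ℝ 1 y Ω)
    (hbij : Set.BijOn x Ωhat Ω)
    (hinv_left : ∀ ξ ∈ Ωhat, y (x ξ) = ξ) (hinv_right : ∀ p ∈ Ω, x (y p) = p)
    (hdet : ∀ ξ ∈ Ωhat, 0 < (jacMat x ξ).det)
    (φhat : (Fin 2 → ℝ) → (Fin 2 → ℝ))
    (hφhat : ContDiff ℝ 1 φhat)
    (hφhat_cpt : HasCompactSupport φhat) (hφhat_supp : tsupport φhat ⊆ Ω) :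
    (∫ p in Ω, ∑ i : Fin 2, gradComp φhat i p ⬝ᵥ gradComp y i p)
      = ∫ ξ in Ωhat,
          frobInner (jacMat (fun q => φhat (x q)) ξ) (Amat (jacMat x ξ))
            / (jacMat x ξ).det :=
  weak_inverse_harmonicity_pullback_general Ωhat Ω hΩhat_open hΩ_open x y hx hy hbij hinv_left hdet
    φhat hφhat
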